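/- Let κ be an invertible linear map Λ²V* → Λ²V* on an oriented 4-dimensional vector space with a pseudo-Riemann metric. Then κ is skewon-free (u∧κ(v) = κ(u)∧v for all u,v) if and only if the (0,4)-tensor A(κ) with components ½|det g|^{1/2} κ^{rs}_{ij} ε_{rskl} is an area metric, i.e., the associated 6×6 matrix (A(κ)_{I₁I₂J₁J₂})_{I,J} over the index set O = {01,02,03,23,31,12} is symmetric and invertible. -/

import Mathlib

open Matrix

noncomputable section

/-- The Levi-Civita permutation symbol on four indices in `{0,1,2,3}`. -/
def eps (i j k l : Fin 4) : ℝ :=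
  (((j : ℕ) : ℝ) - ((i : ℕ) : ℝ)) * (((k : ℕ) : ℝ) - ((i : ℕ) : ℝ)) *
    (((l : ℕ) : ℝ) - ((i : ℕ) : ℝ)) * (((k : ℕ) : ℝ) - ((j : ℕ) : ℝ)) *
    (((l : ℕ) : ℝ) - ((j : ℕ) : ℝ)) * (((l : ℕ) : ℝ) - ((k : ℕ) : ℝ)) / 12

/-- First indices of the ordered pairs `O = {01, 02, 03, 23, 31, 12}`. -/
def p1 : Fin 6 → Fin 4 := ![0, 0, 0, 2, 3, 1]

/-- Second indices of the ordered pairs `O = {01, 02, 03, 23, 31, 12}`. -/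
def p2 : Fin 6 → Fin 4 := ![1, 2, 3, 3, 1, 2]

/-- The wedge product pairing of two 2-forms on `ℝ⁴` given by their
antisymmetric component matrices: `∑ u_{ij} v_{kl} ε^{ijkl}` (four times the
coefficient of the volume form in `u ∧ v`). -/
def wedge4 (u v : Matrix (Fin 4) (Fin 4) ℝ) : ℝ :=
  ∑ i : Fin 4, ∑ j : Fin 4, ∑ k : Fin 4, ∑ l : Fin 4, u i j * v k l * eps i j k l

/-- The linear map `Λ²(ℝ⁴)* → Λ²(ℝ⁴)*` determined by a `(2,2)`-tensor with
components `T = κ^{rs}_{ij}`, acting on a 2-form `v` by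
`κ(v)_{ij} = ½ κ^{rs}_{ij} v_{rs}`. -/
def actT (T : Fin 4 → Fin 4 → Fin 4 → Fin 4 → ℝ) (v : Matrix (Fin 4) (Fin 4) ℝ) :
    Matrix (Fin 4) (Fin 4) ℝ :=
  Matrix.of fun i j => (1 / 2) * ∑ r : Fin 4, ∑ s : Fin 4, T r s i j * v r s

/-! ### Auxiliary machinery -/

/-- The Hodge-type pairing on the index set `O`: pair `I` is matched with the
complementary pair `sig I`. -/
def sig : Fin 6 → Fin 6 := ![3, 4, 5, 0, 1, 2]

/-- The standard basis of antisymmetric `4 × 4` matrices, indexed by `O`. -/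
def Emat : Fin 6 → Matrix (Fin 4) (Fin 4) ℝ :=
  ![!![0,1,0,0; -1,0,0,0; 0,0,0,0; 0,0,0,0],
    !![0,0,1,0; 0,0,0,0; -1,0,0,0; 0,0,0,0],
    !![0,0,0,1; 0,0,0,0; 0,0,0,0; -1,0,0,0],
    !![0,0,0,0; 0,0,0,0; 0,0,0,1; 0,0,-1,0],
    !![0,0,0,0; 0,0,0,-1; 0,0,0,0; 0,1,0,0],
    !![0,0,0,0; 0,0,1,0; 0,-1,0,0; 0,0,0,0]]

lemma Emat0 : Emat 0 = !![0,1,0,0; -1,0,0,0; 0,0,0,0; 0,0,0,0] := rfl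
lemma Emat1 : Emat 1 = !![0,0,1,0; 0,0,0,0; -1,0,0,0; 0,0,0,0] := rfl
lemma Emat2 : Emat 2 = !![0,0,0,1; 0,0,0,0; 0,0,0,0; -1,0,0,0] := rfl
lemma Emat3 : Emat 3 = !![0,0,0,0; 0,0,0,0; 0,0,0,1; 0,0,-1,0] := rfl
lemma Emat4 : Emat 4 = !![0,0,0,0; 0,0,0,-1; 0,0,0,0; 0,1,0,0] := rfl
lemma Emat5 : Emat 5 = !![0,0,0,0; 0,0,1,0; 0,-1,0,0; 0,0,0,0] := rfl

lemma p10 : p1 0 = 0 := rfl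
lemma p11 : p1 1 = 0 := rfl
lemma p12 : p1 2 = 0 := rfl
lemma p13 : p1 3 = 2 := rfl
lemma p14 : p1 4 = 3 := rfl
lemma p15 : p1 5 = 1 := rfl
lemma p20 : p2 0 = 1 := rfl
lemma p21 : p2 1 = 2 := rfl
lemma p22 : p2 2 = 3 := rfl
lemma p23 : p2 3 = 3 := rfl
lemma p24 : p2 4 = 1 := rfl
lemma p25 : p2 5 = 2 := rfl

lemma sg0 : sig 0 = 3 := rfl
lemma sg1 : sig 1 = 4 := rfl
lemma sg2 : sig 2 = 5 := rfl
lemma sg3 : sig 3 = 0 := rfl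
lemma sg4 : sig 4 = 1 := rfl
lemma sg5 : sig 5 = 2 := rfl

lemma fm0 : (⟨0, by norm_num⟩ : Fin 6) = 0 := rfl
lemma fm1 : (⟨1, by norm_num⟩ : Fin 6) = 1 := rfl
lemma fm2 : (⟨2, by norm_num⟩ : Fin 6) = 2 := rfl
lemma fm3 : (⟨3, by norm_num⟩ : Fin 6) = 3 := rfl
lemma fm4 : (⟨4, by norm_num⟩ : Fin 6) = 4 := rfl
lemma fm5 : (⟨5, by norm_num⟩ : Fin 6) = 5 := rfl

lemma fv2 : ((2 : Fin 4) : ℕ) = 2 := rfl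
lemma fv3 : ((3 : Fin 4) : ℕ) = 3 := rfl

lemma sig_invol : Function.Involutive sig := fun x => by fin_cases x <;> rfl

/-- `sig` as a permutation of `Fin 6`. -/
def sigE : Equiv.Perm (Fin 6) := sig_invol.toPerm _

lemma sigE_apply (x : Fin 6) : sigE x = sig x := rfl

lemma eps_pair (i j k l : Fin 4) : eps k l i j = eps i j k l := by unfold eps; ring

lemma eps_swap12 (i j k l : Fin 4) : eps j i k l = -eps i j k l := by unfold eps; ring

lemma Emat_antisym (I : Fin 6) : (Emat I)ᵀ = -(Emat I) := by
  fin_cases I <;>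
    (ext i j; fin_cases i <;> fin_cases j <;>
      simp [Emat0, Emat1, Emat2, Emat3, Emat4, Emat5, Matrix.vecHead, Matrix.vecTail,
        Function.comp])

/-- Decomposition of an antisymmetric matrix in the basis `Emat`. -/
lemma decomp (u : Matrix (Fin 4) (Fin 4) ℝ) (hu : uᵀ = -u) :
    u = ∑ I : Fin 6, u (p1 I) (p2 I) • Emat I := by
  have h : ∀ a b, u b a = -u a b := fun a b => by
    have := congrFun (congrFun hu a) b; simpa using this
  ext i j
  fin_cases i <;> fin_cases j <;>
    simp [Matrix.sum_apply, Matrix.smul_apply, smul_eq_mul, Fin.sum_univ_six,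
      Emat0, Emat1, Emat2, Emat3, Emat4, Emat5,
      p10, p11, p12, p13, p14, p15, p20, p21, p22, p23, p24, p25,
      Matrix.vecHead, Matrix.vecTail] <;>
    first
      | linarith [h 0 0, h 1 1, h 2 2, h 3 3]
      | linarith [h 0 1, h 0 2, h 0 3, h 1 2, h 1 3, h 2 3]

section
variable (T : Fin 4 → Fin 4 → Fin 4 → Fin 4 → ℝ)

lemma actT_E (h1 : ∀ a b c d, T b a c d = -T a b c d) (J : Fin 6) (i j : Fin 4) :
    actT T (Emat J) i j = T (p1 J) (p2 J) i j := by
  fin_cases J <;>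
    simp [fm0, fm1, fm2, fm3, fm4, fm5, actT, Fin.sum_univ_four,
      Emat0, Emat1, Emat2, Emat3, Emat4, Emat5,
      p10, p11, p12, p13, p14, p15, p20, p21, p22, p23, p24, p25,
      Matrix.vecHead, Matrix.vecTail] <;>
    linarith [h1 0 1 i j, h1 0 2 i j, h1 0 3 i j, h1 2 3 i j, h1 3 1 i j, h1 1 2 i j]

lemma sumTeps (h2 : ∀ a b c d, T a b d c = -T a b c d) (J : Fin 6) (a b : Fin 4) :
    ∑ k : Fin 4, ∑ l : Fin 4, T a b k l * eps (p1 J) (p2 J) k l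
      = 2 * T a b (p1 (sig J)) (p2 (sig J)) := by
  fin_cases J <;>
    norm_num [fm0, fm1, fm2, fm3, fm4, fm5, Fin.sum_univ_four, eps, fv2, fv3,
      sg0, sg1, sg2, sg3, sg4, sg5,
      p10, p11, p12, p13, p14, p15, p20, p21, p22, p23, p24, p25,
      Matrix.vecHead, Matrix.vecTail] <;>
    linarith [h2 a b 0 1, h2 a b 0 2, h2 a b 0 3, h2 a b 2 3, h2 a b 3 1, h2 a b 1 2]

lemma sumTeps' (h1 : ∀ a b c d, T b a c d = -T a b c d) (J : Fin 6) (a b : Fin 4) :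
    ∑ r : Fin 4, ∑ s : Fin 4, T r s a b * eps r s (p1 J) (p2 J)
      = 2 * T (p1 (sig J)) (p2 (sig J)) a b := by
  fin_cases J <;>
    norm_num [fm0, fm1, fm2, fm3, fm4, fm5, Fin.sum_univ_four, eps, fv2, fv3,
      sg0, sg1, sg2, sg3, sg4, sg5,
      p10, p11, p12, p13, p14, p15, p20, p21, p22, p23, p24, p25,
      Matrix.vecHead, Matrix.vecTail] <;>
    linarith [h1 0 1 a b, h1 0 2 a b, h1 0 3 a b, h1 2 3 a b, h1 3 1 a b, h1 1 2 a b]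
end

/-- Summation of an antisymmetric function against a basis matrix. -/
lemma sumE (I : Fin 6) (f : Fin 4 → Fin 4 → ℝ) (hf : ∀ a b, f b a = -f a b) :
    ∑ i : Fin 4, ∑ j : Fin 4, Emat I i j * f i j = 2 * f (p1 I) (p2 I) := by
  fin_cases I <;>
    norm_num [fm0, fm1, fm2, fm3, fm4, fm5, Fin.sum_univ_four,
      Emat0, Emat1, Emat2, Emat3, Emat4, Emat5,
      p10, p11, p12, p13, p14, p15, p20, p21, p22, p23, p24, p25,
      Matrix.vecHead, Matrix.vecTail, Matrix.cons_val_two, Matrix.cons_val_three] <;>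
    linarith [hf 0 1, hf 0 2, hf 0 3, hf 2 3, hf 3 1, hf 1 2]

lemma sum4_comm (F : Fin 4 → Fin 4 → Fin 4 → Fin 4 → ℝ) :
    (∑ i : Fin 4, ∑ j : Fin 4, ∑ k : Fin 4, ∑ l : Fin 4, F i j k l)
      = ∑ k : Fin 4, ∑ l : Fin 4, ∑ i : Fin 4, ∑ j : Fin 4, F i j k l :=
  calc (∑ i : Fin 4, ∑ j : Fin 4, ∑ k : Fin 4, ∑ l : Fin 4, F i j k l)
      = ∑ i : Fin 4, ∑ k : Fin 4, ∑ j : Fin 4, ∑ l : Fin 4, F i j k l :=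
        Finset.sum_congr rfl fun i _ => Finset.sum_comm
    _ = ∑ k : Fin 4, ∑ i : Fin 4, ∑ j : Fin 4, ∑ l : Fin 4, F i j k l := Finset.sum_comm
    _ = ∑ k : Fin 4, ∑ i : Fin 4, ∑ l : Fin 4, ∑ j : Fin 4, F i j k l :=
        Finset.sum_congr rfl fun k _ => Finset.sum_congr rfl fun i _ => Finset.sum_comm
    _ = ∑ k : Fin 4, ∑ l : Fin 4, ∑ i : Fin 4, ∑ j : Fin 4, F i j k l :=
        Finset.sum_congr rfl fun k _ => Finset.sum_comm

lemma wedge4_comm (u v : Matrix (Fin 4) (Fin 4) ℝ) : wedge4 u v = wedge4 v u := by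
  unfold wedge4
  rw [sum4_comm]
  exact Finset.sum_congr rfl fun k _ => Finset.sum_congr rfl fun l _ =>
    Finset.sum_congr rfl fun i _ => Finset.sum_congr rfl fun j _ => by
      rw [← eps_pair]; ring

section
variable (T : Fin 4 → Fin 4 → Fin 4 → Fin 4 → ℝ)

lemma key1 (h1 : ∀ a b c d, T b a c d = -T a b c d)
    (h2 : ∀ a b c d, T a b d c = -T a b c d) (I J : Fin 6) :
    wedge4 (Emat I) (actT T (Emat J))
      = 4 * T (p1 J) (p2 J) (p1 (sig I)) (p2 (sig I)) := by
  have hE : ∀ k l, actT T (Emat J) k l = T (p1 J) (p2 J) k l := actT_E T h1 J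
  have : wedge4 (Emat I) (actT T (Emat J))
      = ∑ i : Fin 4, ∑ j : Fin 4, Emat I i j *
          ∑ k : Fin 4, ∑ l : Fin 4, T (p1 J) (p2 J) k l * eps i j k l := by
    unfold wedge4
    refine Finset.sum_congr rfl fun i _ => Finset.sum_congr rfl fun j _ => ?_
    rw [Finset.mul_sum]
    refine Finset.sum_congr rfl fun k _ => ?_
    rw [Finset.mul_sum]
    refine Finset.sum_congr rfl fun l _ => ?_
    rw [hE]; ring
  rw [this, sumE I _ (fun a b => by
    have hptw : ∀ k l : Fin 4, T (p1 J) (p2 J) k l * eps b a k l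
        = -(T (p1 J) (p2 J) k l * eps a b k l) := fun k l => by
      rw [eps_swap12]; ring
    simp only [hptw, Finset.sum_neg_distrib]), sumTeps T h2 I]
  ring

lemma key2 (h1 : ∀ a b c d, T b a c d = -T a b c d)
    (h2 : ∀ a b c d, T a b d c = -T a b c d) (I J : Fin 6) :
    wedge4 (actT T (Emat I)) (Emat J)
      = 4 * T (p1 I) (p2 I) (p1 (sig J)) (p2 (sig J)) := by
  rw [wedge4_comm, key1 T h1 h2 J I]
end

/-! ### Linearity lemmas -/

lemma wedge4_add_left (u u' w : Matrix (Fin 4) (Fin 4) ℝ) :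
    wedge4 (u + u') w = wedge4 u w + wedge4 u' w := by
  simp [wedge4, Matrix.add_apply, add_mul, Finset.sum_add_distrib]

lemma wedge4_smul_left (c : ℝ) (u w : Matrix (Fin 4) (Fin 4) ℝ) :
    wedge4 (c • u) w = c * wedge4 u w := by
  simp [wedge4, Matrix.smul_apply, smul_eq_mul, Finset.mul_sum, mul_assoc]

lemma wedge4_zero_left (w : Matrix (Fin 4) (Fin 4) ℝ) : wedge4 0 w = 0 := by
  simp [wedge4]

lemma wedge4_add_right (u w w' : Matrix (Fin 4) (Fin 4) ℝ) :
    wedge4 u (w + w') = wedge4 u w + wedge4 u w' := by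
  simp [wedge4, Matrix.add_apply, mul_add, add_mul, Finset.sum_add_distrib]

lemma wedge4_smul_right (c : ℝ) (u w : Matrix (Fin 4) (Fin 4) ℝ) :
    wedge4 u (c • w) = c * wedge4 u w := by
  rw [wedge4_comm, wedge4_smul_left, wedge4_comm]

lemma wedge4_zero_right (u : Matrix (Fin 4) (Fin 4) ℝ) : wedge4 u 0 = 0 := by
  rw [wedge4_comm, wedge4_zero_left]

lemma wedge4_sum_left (f : Fin 6 → Matrix (Fin 4) (Fin 4) ℝ)
    (w : Matrix (Fin 4) (Fin 4) ℝ) (s : Finset (Fin 6)) :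
    wedge4 (∑ I ∈ s, f I) w = ∑ I ∈ s, wedge4 (f I) w := by
  induction s using Finset.cons_induction with
  | empty => simp [wedge4_zero_left]
  | cons a s ha ih => rw [Finset.sum_cons, Finset.sum_cons, wedge4_add_left, ih]

lemma wedge4_sum_right (f : Fin 6 → Matrix (Fin 4) (Fin 4) ℝ)
    (u : Matrix (Fin 4) (Fin 4) ℝ) (s : Finset (Fin 6)) :
    wedge4 u (∑ I ∈ s, f I) = ∑ I ∈ s, wedge4 u (f I) := by
  induction s using Finset.cons_induction with
  | empty => simp [wedge4_zero_right]
  | cons a s ha ih => rw [Finset.sum_cons, Finset.sum_cons, wedge4_add_right, ih]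

section
variable (T : Fin 4 → Fin 4 → Fin 4 → Fin 4 → ℝ)

lemma actT_add (u v : Matrix (Fin 4) (Fin 4) ℝ) :
    actT T (u + v) = actT T u + actT T v := by
  ext i j
  simp [actT, Matrix.add_apply, mul_add, Finset.sum_add_distrib]

lemma actT_smul (c : ℝ) (u : Matrix (Fin 4) (Fin 4) ℝ) :
    actT T (c • u) = c • actT T u := by
  ext i j
  have key : (∑ r : Fin 4, ∑ s : Fin 4, T r s i j * (c * u r s))
      = c * ∑ r : Fin 4, ∑ s : Fin 4, T r s i j * u r s := by
    rw [Finset.mul_sum]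
    refine Finset.sum_congr rfl fun r _ => ?_
    rw [Finset.mul_sum]
    exact Finset.sum_congr rfl fun s _ => by ring
  simp only [actT, Matrix.of_apply, Matrix.smul_apply, smul_eq_mul, key]
  ring

lemma actT_zero : actT T 0 = 0 := by
  ext i j; simp [actT]

lemma actT_sum (f : Fin 6 → Matrix (Fin 4) (Fin 4) ℝ) (s : Finset (Fin 6)) :
    actT T (∑ I ∈ s, f I) = ∑ I ∈ s, actT T (f I) := by
  induction s using Finset.cons_induction with
  | empty => simp [actT_zero]
  | cons a s ha ih => rw [Finset.sum_cons, Finset.sum_cons, actT_add, ih]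
end

/-- For an invertible `(2,2)`-tensor `κ` (with components `κ^{rs}_{ij}`
antisymmetric in both pairs) on an oriented 4-space with pseudo-Riemann metric
`g`, `κ` is skewon-free iff the `6 × 6` matrix
`(A(κ)_{I₁I₂J₁J₂})_{I,J∈O}`, where `A(κ)_{ijkl} = ½|det g|^{1/2} κ^{rs}_{ij} ε_{rskl}`,
is symmetric and invertible, i.e. iff `A(κ)` is an area metric. -/
theorem skewon_free_iff_area_metric (g : Matrix (Fin 4) (Fin 4) ℝ)
    (hgs : g.IsSymm) (hgd : g.det ≠ 0)
    (T : Fin 4 → Fin 4 → Fin 4 → Fin 4 → ℝ)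
    (hT : ∀ i j k l, T j i k l = -T i j k l ∧ T i j l k = -T i j k l)
    (hinv : IsUnit (Matrix.of fun I J : Fin 6 =>
      T (p1 J) (p2 J) (p1 I) (p2 I)).det) :
    (∀ u v : Matrix (Fin 4) (Fin 4) ℝ, uᵀ = -u → vᵀ = -v →
        wedge4 u (actT T v) = wedge4 (actT T u) v) ↔
      ((Matrix.of fun I J : Fin 6 => (1 / 2) * Real.sqrt |g.det| *
          ∑ r : Fin 4, ∑ s : Fin 4,
            T r s (p1 I) (p2 I) * eps r s (p1 J) (p2 J)).IsSymm ∧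
        IsUnit (Matrix.of fun I J : Fin 6 => (1 / 2) * Real.sqrt |g.det| *
          ∑ r : Fin 4, ∑ s : Fin 4,
            T r s (p1 I) (p2 I) * eps r s (p1 J) (p2 J)).det) := by
  have h1 : ∀ a b c d, T b a c d = -T a b c d := fun a b c d => (hT a b c d).1
  have h2 : ∀ a b c d, T a b d c = -T a b c d := fun a b c d => (hT a b c d).2
  set c : ℝ := Real.sqrt |g.det| with hc
  have hcpos : 0 < c := Real.sqrt_pos.mpr (abs_pos.mpr hgd)
  set A : Matrix (Fin 6) (Fin 6) ℝ := Matrix.of fun I J : Fin 6 =>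
    (1 / 2) * c * ∑ r : Fin 4, ∑ s : Fin 4,
      T r s (p1 I) (p2 I) * eps r s (p1 J) (p2 J) with hA
  set Q : Fin 6 → Fin 6 → ℝ := fun I J => T (p1 (sig J)) (p2 (sig J)) (p1 I) (p2 I)
    with hQ
  have hAQ : ∀ I J, A I J = c * Q I J := by
    intro I J
    show (1 / 2) * c * _ = _
    rw [sumTeps' T h1 J (p1 I) (p2 I)]
    ring
  -- invertibility of A, unconditionally
  have hM : A = c • ((Matrix.of fun I J : Fin 6 =>
      T (p1 J) (p2 J) (p1 I) (p2 I)).submatrix id sigE) := by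
    ext I J
    simp only [Matrix.smul_apply, Matrix.submatrix_apply, id_eq, smul_eq_mul,
      Matrix.of_apply, sigE_apply]
    exact hAQ I J
  have hAdet : IsUnit A.det := by
    rw [hM, Matrix.det_smul, Matrix.det_permute']
    refine (isUnit_iff_ne_zero.mpr ?_)
    have hMd : (Matrix.of fun I J : Fin 6 =>
        T (p1 J) (p2 J) (p1 I) (p2 I)).det ≠ 0 := isUnit_iff_ne_zero.mp hinv
    have hs : ((Equiv.Perm.sign sigE : ℤ) : ℝ) ≠ 0 := by
      rcases Int.units_eq_one_or (Equiv.Perm.sign sigE) with h | h <;> rw [h] <;> norm_num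
    positivity
  -- the key equivalence
  have keyiff : (∀ u v : Matrix (Fin 4) (Fin 4) ℝ, uᵀ = -u → vᵀ = -v →
      wedge4 u (actT T v) = wedge4 (actT T u) v) ↔
      ∀ I J, Q (sig I) (sig J) = Q (sig J) (sig I) := by
    constructor
    · intro hC I J
      have := hC (Emat I) (Emat J) (Emat_antisym I) (Emat_antisym J)
      rw [key1 T h1 h2 I J, key2 T h1 h2 I J] at this
      have : T (p1 J) (p2 J) (p1 (sig I)) (p2 (sig I))
          = T (p1 I) (p2 I) (p1 (sig J)) (p2 (sig J)) := by linarith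
      simp only [hQ, sig_invol I, sig_invol J]
      exact this
    · intro hs u v hu hv
      have hS : ∀ I J, T (p1 J) (p2 J) (p1 (sig I)) (p2 (sig I))
          = T (p1 I) (p2 I) (p1 (sig J)) (p2 (sig J)) := by
        intro I J
        have := hs I J
        simp only [hQ, sig_invol I, sig_invol J] at this
        exact this
      rw [decomp u hu, decomp v hv]
      rw [actT_sum, actT_sum]
      simp only [actT_smul, wedge4_sum_left, wedge4_sum_right, wedge4_smul_left,
        wedge4_smul_right, Finset.mul_sum, key1 T h1 h2, key2 T h1 h2]
      refine Finset.sum_congr rfl fun I _ => Finset.sum_congr rfl fun J _ => ?_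
      rw [hS I J]
  rw [keyiff]
  constructor
  · intro hs
    refine ⟨?_, hAdet⟩
    show Aᵀ = A
    ext I J
    rw [Matrix.transpose_apply, hAQ I J, hAQ J I]
    have := hs (sig I) (sig J)
    rw [sig_invol I, sig_invol J] at this
    simp only [hQ] at this ⊢
    rw [this]
  · rintro ⟨hsymm, -⟩ I J
    have := congrFun (congrFun hsymm (sig I)) (sig J)
    rw [Matrix.transpose_apply] at this
    rw [hAQ (sig J) (sig I), hAQ (sig I) (sig J)] at this
    have h := mul_left_cancel₀ (ne_of_gt hcpos) this
    rw [h]
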